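/- arXiv:1912.03373 — 3 statements merged into one kernel-verified Lean document; each statement's English description precedes it below -/
import Mathlib

section
/- Let d ≥ 1 and let S be a real symmetric (d+2)×(d+2) matrix whose last row and last column are identically zero and whose leading (d+1)×(d+1) principal submatrix S' has zero diagonal and all off-diagonal entries equal to ±1. Let λ be the minimum eigenvalue of S'. If there exist μ ∈ ℝ and a real symmetric (d+2)×(d+2) matrix X such that I + μS + X ∈ E_{d+2,d}, X_{ij} = 0 whenever i = j or S_{ij} ≠ 0, and -μ ≤ X_{ij} ≤ μ for all i,j, then 1 + μλ = 0. -/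
/-!
The leading `(d+1)×(d+1)` principal submatrix of `G = I + μS + X` is `I + μS'`, because `X`
vanishes on the diagonal and wherever `S'` is `±1`. It is positive semidefinite, and singular since
its rank is at most `rank G ≤ d`. A kernel vector makes `-1/μ` an eigenvalue of `S'`, so
`μλ ≤ -1`; evaluating the quadratic form of `I + μS'` at a `λ`-eigenvector gives `1 + μλ ≥ 0`.
-/

open Matrix

noncomputable section

/-- `E_{n,d}`: real symmetric PSD `n×n` matrices with unit diagonal and rank at most `d`. -/
def memE (n d : ℕ) (G : Matrix (Fin n) (Fin n) ℝ) : Prop :=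
  G.PosSemidef ∧ (∀ i, G i i = 1) ∧ G.rank ≤ d

/-- Coherence `μ(G) = max_{i ≠ j} |G i j|`. -/
def coh {n : ℕ} (G : Matrix (Fin n) (Fin n) ℝ) : ℝ :=
  sSup {x : ℝ | ∃ i j : Fin n, i ≠ j ∧ x = |G i j|}

/-- `μ_{n,d} = inf { μ(G) : G ∈ E_{n,d} }`. -/
def muMin (n d : ℕ) : ℝ :=
  sInf {x : ℝ | ∃ G : Matrix (Fin n) (Fin n) ℝ, memE n d G ∧ x = coh G}

/-- Signed permutation matrices. -/
def IsSignedPerm {n : ℕ} (P : Matrix (Fin n) (Fin n) ℝ) : Prop :=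
  ∃ (σ : Equiv.Perm (Fin n)) (ε : Fin n → ℝ),
    (∀ i, ε i = 1 ∨ ε i = -1) ∧ ∀ i j, P i j = if j = σ i then ε i else 0

open Module.End

namespace Matrix

variable {n : Type*} [Fintype n] [DecidableEq n]

theorem det_eq_zero_of_rank_lt_card {K : Type*} [Field K] {A : Matrix n n K}
    (h : A.rank < Fintype.card n) : A.det = 0 :=
  by_contra fun hA => h.ne (rank_of_det_ne_zero hA)

theorem ne_zero_of_det_one_add_smul_eq_zero {K : Type*} [Field K] {M : Matrix n n K} {μ : K}
    (h : (1 + μ • M).det = 0) : μ ≠ 0 := by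
  rintro rfl
  simp at h

theorem hasEigenvalue_neg_inv_of_det_one_add_smul_eq_zero {K : Type*} [Field K]
    {M : Matrix n n K} {μ : K} (h : (1 + μ • M).det = 0) :
    HasEigenvalue (toLin' M) (-μ⁻¹) := by
  have hμ := ne_zero_of_det_one_add_smul_eq_zero h
  obtain ⟨v, hv0, hv⟩ := exists_mulVec_eq_zero_iff.mpr h
  rw [add_mulVec, one_mulVec, smul_mulVec] at hv
  have hMv : M *ᵥ v = -μ⁻¹ • v := by
    rw [← inv_smul_smul₀ hμ (M *ᵥ v), eq_neg_of_add_eq_zero_right hv, smul_neg, neg_smul]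
  exact hasEigenvalue_of_hasEigenvector ⟨by rw [mem_eigenspace_iff, toLin'_apply, hMv], hv0⟩

theorem PosSemidef.one_add_mul_nonneg_of_hasEigenvalue {M : Matrix n n ℝ} {μ t : ℝ}
    (hpsd : (1 + μ • M).PosSemidef) (ht : HasEigenvalue (toLin' M) t) : 0 ≤ 1 + μ * t := by
  obtain ⟨w, hw⟩ := ht.exists_hasEigenvector
  have hMw : M *ᵥ w = t • w := by simpa only [toLin'_apply] using hw.apply_eq_smul
  have hquad : star w ⬝ᵥ (1 + μ • M) *ᵥ w = (1 + μ * t) * (w ⬝ᵥ w) := by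
    rw [add_mulVec, one_mulVec, smul_mulVec, hMw, star_trivial, dotProduct_add, dotProduct_smul,
      dotProduct_smul, smul_eq_mul, smul_eq_mul]
    ring
  have hww : 0 < w ⬝ᵥ w := by
    simpa only [star_trivial] using dotProduct_star_self_pos_iff.mpr hw.2
  have := hpsd.dotProduct_mulVec_nonneg w
  rw [hquad] at this
  exact nonneg_of_mul_nonneg_left this hww

theorem one_add_mul_eq_zero_of_posSemidef_of_det_eq_zero {M : Matrix n n ℝ} {μ lam : ℝ}
    (hμ : 0 ≤ μ) (hpsd : (1 + μ • M).PosSemidef) (hdet : (1 + μ • M).det = 0)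
    (hlam : HasEigenvalue (toLin' M) lam)
    (hlam_min : ∀ t : ℝ, HasEigenvalue (toLin' M) t → lam ≤ t) :
    1 + μ * lam = 0 := by
  have hμ_pos : 0 < μ := hμ.lt_of_ne (ne_zero_of_det_one_add_smul_eq_zero hdet).symm
  have hle : μ * lam ≤ -1 :=
    calc μ * lam ≤ μ * -μ⁻¹ := by
          gcongr
          exact hlam_min _ (hasEigenvalue_neg_inv_of_det_one_add_smul_eq_zero hdet)
      _ = -1 := by rw [mul_neg, mul_inv_cancel₀ hμ_pos.ne']
  linarith [hpsd.one_add_mul_nonneg_of_hasEigenvalue hlam]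

end Matrix

theorem lemma_eig_general (d : ℕ)
    (S : Matrix (Fin (d + 2)) (Fin (d + 2)) ℝ)
    (S' : Matrix (Fin (d + 1)) (Fin (d + 1)) ℝ)
    (hS' : ∀ i j, S' i j = S i.castSucc j.castSucc)
    (hoff : ∀ i j, i ≠ j → S' i j = 1 ∨ S' i j = -1)
    (lam : ℝ)
    (hlam : Module.End.HasEigenvalue (Matrix.toLin' S') lam)
    (hlam_min : ∀ t : ℝ, Module.End.HasEigenvalue (Matrix.toLin' S') t → lam ≤ t)
    (μ : ℝ) (X : Matrix (Fin (d + 2)) (Fin (d + 2)) ℝ)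
    (hmem : memE (d + 2) d (1 + μ • S + X))
    (hsupp : ∀ i j : Fin (d + 2), (i = j ∨ S i j ≠ 0) → X i j = 0)
    (hbound : ∀ i j : Fin (d + 2), -μ ≤ X i j ∧ X i j ≤ μ) :
    1 + μ * lam = 0 := by
  obtain ⟨hpsd, -, hrank⟩ := hmem
  have hX : ∀ i j : Fin (d + 1), X i.castSucc j.castSucc = 0 := fun i j =>
    hsupp _ _ <| (eq_or_ne i j).imp (congrArg _) fun hij => by
      rcases hoff i j hij with h | h <;> simp [← hS', h]
  have hsub : (1 + μ • S + X).submatrix Fin.castSucc Fin.castSucc = 1 + μ • S' := by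
    ext i j
    simp [Matrix.one_apply, hS', hX]
  have hdet : (1 + μ • S').det = 0 := by
    refine det_eq_zero_of_rank_lt_card ?_
    rw [← hsub, Fintype.card_fin]
    exact (rank_submatrix_le _ _ _).trans_lt (hrank.trans_lt d.lt_succ_self)
  have hμ : 0 ≤ μ := by
    have := (hbound 0 0).1
    rw [hsupp 0 0 (Or.inl rfl)] at this
    linarith
  exact one_add_mul_eq_zero_of_posSemidef_of_det_eq_zero hμ (hsub ▸ hpsd.submatrix _) hdet hlam
    hlam_min

/-- Lemma `eig`: if the subprogram for `S ∈ 𝒮₁` is feasible with value `μ`,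
then `1 + μλ = 0`, where `λ` is the minimum eigenvalue of the leading principal submatrix. -/
theorem lemma_eig (d : ℕ) (hd : 1 ≤ d)
    (S : Matrix (Fin (d + 2)) (Fin (d + 2)) ℝ) (hSsymm : S.IsSymm)
    (hlast : ∀ i, S i (Fin.last (d + 1)) = 0 ∧ S (Fin.last (d + 1)) i = 0)
    (S' : Matrix (Fin (d + 1)) (Fin (d + 1)) ℝ)
    (hS' : ∀ i j, S' i j = S i.castSucc j.castSucc)
    (hdiag : ∀ i, S' i i = 0)
    (hoff : ∀ i j, i ≠ j → S' i j = 1 ∨ S' i j = -1)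
    (lam : ℝ)
    (hlam : Module.End.HasEigenvalue (Matrix.toLin' S') lam)
    (hlam_min : ∀ t : ℝ, Module.End.HasEigenvalue (Matrix.toLin' S') t → lam ≤ t)
    (μ : ℝ) (X : Matrix (Fin (d + 2)) (Fin (d + 2)) ℝ) (hXsymm : X.IsSymm)
    (hmem : memE (d + 2) d (1 + μ • S + X))
    (hsupp : ∀ i j : Fin (d + 2), (i = j ∨ S i j ≠ 0) → X i j = 0)
    (hbound : ∀ i j : Fin (d + 2), -μ ≤ X i j ∧ X i j ≤ μ) :
    1 + μ * lam = 0 :=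
  lemma_eig_general d S S' hS' hoff lam hlam hlam_min μ X hmem hsupp hbound
end
end

section
/- Let d ≥ 1 and let S be a real symmetric (d+2)×(d+2) matrix whose last row and last column are identically zero and whose leading (d+1)×(d+1) principal submatrix S' has zero diagonal and all off-diagonal entries equal to ±1. Let λ < 0 be the minimum eigenvalue of S', suppose λ has multiplicity 1 as an eigenvalue of S', let L be a real (d+1)×d matrix with L Lᵀ = I - λ⁻¹ S', and set L† := (Lᵀ L)⁻¹ Lᵀ. If ‖L† y‖₂ < -λ for every y ∈ {±1}^{d+1}, then there exist no μ ∈ ℝ and real symmetric (d+2)×(d+2) matrix X such that I + μS + X ∈ E_{d+2,d}, X_{ij} = 0 whenever i = j or S_{ij} ≠ 0, and -μ ≤ X_{ij} ≤ μ for all i,j. -/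
open Matrix

noncomputable section

/-- Euclidean norm of a vector in `ℝ^m`. -/
def vecEnorm {m : ℕ} (v : Fin m → ℝ) : ℝ := Real.sqrt (∑ i, v i ^ 2)




lemma vecEnorm_eq_norm {m : ℕ} (v : Fin m → ℝ) :
    vecEnorm v = ‖(WithLp.equiv 2 (Fin m → ℝ)).symm v‖ := by
  rw [EuclideanSpace.norm_eq]
  simp [vecEnorm, Real.norm_eq_abs, sq_abs]

lemma vecEnorm_smul {m : ℕ} (c : ℝ) (v : Fin m → ℝ) : vecEnorm (c • v) = |c| * vecEnorm v := by
  simp [vecEnorm_eq_norm, norm_smul, Real.norm_eq_abs]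

lemma vecEnorm_convexOn {m n : ℕ} (A : Matrix (Fin m) (Fin n) ℝ) :
    ConvexOn ℝ Set.univ (fun w => vecEnorm (A.mulVec w)) := by
  have h := (convexOn_univ_norm (E := EuclideanSpace ℝ (Fin m))).comp_affineMap
    ((((WithLp.linearEquiv 2 ℝ (Fin m → ℝ)).symm.toLinearMap.comp
      A.mulVecLin)).toAffineMap)
  simpa [Function.comp_def, vecEnorm_eq_norm] using h

lemma cube_bound {m n : ℕ} (A : Matrix (Fin m) (Fin n) ℝ) (b : ℝ)
    (hb : ∀ y : Fin n → ℝ, (∀ i, y i = 1 ∨ y i = -1) → vecEnorm (A.mulVec y) < b)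
    (x : Fin n → ℝ) (hx : ∀ i, |x i| ≤ 1) : vecEnorm (A.mulVec x) < b := by
  have hhull : x ∈ convexHull ℝ (Set.pi Set.univ fun _ : Fin n => ({-1, 1} : Set ℝ)) := by
    rw [convexHull_pi]
    intro i _
    rw [convexHull_pair, segment_eq_Icc (by norm_num : (-1:ℝ) ≤ 1)]
    exact abs_le.mp (hx i)
  obtain ⟨y, hy, hxy⟩ := (vecEnorm_convexOn A).exists_ge_of_mem_convexHull
    (Set.subset_univ _) hhull
  have hy' : ∀ i, y i = 1 ∨ y i = -1 := by
    intro i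
    have := hy i (Set.mem_univ i)
    simp only [Set.mem_insert_iff, Set.mem_singleton_iff] at this
    tauto
  exact lt_of_le_of_lt hxy (hb y hy')

lemma rank_submatrix_le' {k n : ℕ} (A : Matrix (Fin n) (Fin n) ℝ) (f : Fin k → Fin n) :
    (A.submatrix f f).rank ≤ A.rank := by
  have key : A.submatrix f f =
      (1 : Matrix (Fin n) (Fin n) ℝ).submatrix f id * A *
        (1 : Matrix (Fin n) (Fin n) ℝ).submatrix id f := by
    ext i j
    simp [mul_apply, one_apply, Finset.sum_ite_eq, Finset.sum_ite_eq']
  rw [key]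
  exact (Matrix.rank_mul_le_left _ _).trans (Matrix.rank_mul_le_right _ _)



set_option maxHeartbeats 1000000 in
/-- Lemma `eiginf`(a): if `‖L† y‖₂ < -λ` for every sign vector `y`,
then the subprogram for `S` is infeasible. -/
theorem lemma_eiginf_a (d : ℕ) (hd : 1 ≤ d)
    (S : Matrix (Fin (d + 2)) (Fin (d + 2)) ℝ) (hSsymm : S.IsSymm)
    (hlast : ∀ i, S i (Fin.last (d + 1)) = 0 ∧ S (Fin.last (d + 1)) i = 0)
    (S' : Matrix (Fin (d + 1)) (Fin (d + 1)) ℝ)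
    (hS' : ∀ i j, S' i j = S i.castSucc j.castSucc)
    (hdiag : ∀ i, S' i i = 0)
    (hoff : ∀ i j, i ≠ j → S' i j = 1 ∨ S' i j = -1)
    (lam : ℝ) (hlam_neg : lam < 0)
    (hlam : Module.End.HasEigenvalue (Matrix.toLin' S') lam)
    (hlam_min : ∀ t : ℝ, Module.End.HasEigenvalue (Matrix.toLin' S') t → lam ≤ t)
    (hlam_mult : Module.finrank ℝ (Module.End.eigenspace (Matrix.toLin' S') lam) = 1)
    (L : Matrix (Fin (d + 1)) (Fin d) ℝ)
    (hL : L * Lᵀ = 1 - lam⁻¹ • S')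
    (Ldag : Matrix (Fin d) (Fin (d + 1)) ℝ)
    (hLdag : Ldag = (Lᵀ * L)⁻¹ * Lᵀ)
    (hsmall : ∀ y : Fin (d + 1) → ℝ, (∀ i, y i = 1 ∨ y i = -1) →
      vecEnorm (Ldag.mulVec y) < -lam) :
    ¬ ∃ (μ : ℝ) (X : Matrix (Fin (d + 2)) (Fin (d + 2)) ℝ),
        X.IsSymm ∧ memE (d + 2) d (1 + μ • S + X) ∧
        (∀ i j : Fin (d + 2), (i = j ∨ S i j ≠ 0) → X i j = 0) ∧
        (∀ i j : Fin (d + 2), -μ ≤ X i j ∧ X i j ≤ μ) := by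
  rintro ⟨μ, X, hXsymm, hmem, hzero, hbound⟩
  obtain ⟨hPSD, hdiagG, hrank⟩ : (1 + μ • S + X).PosSemidef ∧ (∀ i, (1 + μ • S + X) i i = 1) ∧ (1 + μ • S + X).rank ≤ d := hmem
  have hlam_ne : lam ≠ 0 := ne_of_lt hlam_neg
  set G : Matrix (Fin (d + 2)) (Fin (d + 2)) ℝ := 1 + μ • S + X with hGdef
  set G' : Matrix (Fin (d + 1)) (Fin (d + 1)) ℝ := 1 + μ • S' with hG'def
  -- X vanishes on the top-left block
  have hX0 : ∀ i j : Fin (d+1), X i.castSucc j.castSucc = 0 := by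
    intro i j
    rcases eq_or_ne i j with rfl | hij
    · exact hzero _ _ (Or.inl rfl)
    · refine hzero _ _ (Or.inr ?_)
      rw [← hS']
      rcases hoff i j hij with h | h <;> rw [h] <;> norm_num
  set x : Fin (d+1) → ℝ := fun i => X i.castSucc (Fin.last (d+1)) with hxdef
  have hcs_ne : ∀ i : Fin (d+1), i.castSucc ≠ Fin.last (d+1) :=
    fun i => (Fin.castSucc_lt_last i).ne
  -- entries of G
  have hGtop : ∀ i j : Fin (d+1), G i.castSucc j.castSucc = G' i j := by
    intro i j
    simp only [hGdef, hG'def, Matrix.add_apply, Matrix.smul_apply, hX0, ← hS',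
      Matrix.one_apply, Fin.castSucc_inj, add_zero]
  have hGsub : G.submatrix Fin.castSucc Fin.castSucc = G' := by
    ext i j; exact hGtop i j
  have hGcl : ∀ i : Fin (d+1), G i.castSucc (Fin.last (d+1)) = x i := by
    intro i
    simp [hGdef, Matrix.one_apply, hcs_ne i, (hlast _).1, hxdef]
  have hGlc : ∀ j : Fin (d+1), G (Fin.last (d+1)) j.castSucc = x j := by
    intro j
    have hsym : X (Fin.last (d+1)) j.castSucc = X j.castSucc (Fin.last (d+1)) :=
      hXsymm.apply _ _
    simp [hGdef, Matrix.one_apply, (hcs_ne j).symm, (hlast _).2, hxdef, hsym]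
  have hGll : G (Fin.last (d+1)) (Fin.last (d+1)) = 1 := hdiagG _
  -- mu nonneg
  have hmu_nonneg : 0 ≤ μ := by
    have h00 : X 0 0 = 0 := hzero 0 0 (Or.inl rfl)
    have := (hbound 0 0).2
    rw [h00] at this; exact this
  -- PSD and rank of G'
  have hPSD' : G'.PosSemidef := hGsub ▸ hPSD.submatrix Fin.castSucc
  have hrank' : G'.rank ≤ d := by
    have := rank_submatrix_le' G Fin.castSucc
    rw [hGsub] at this
    exact this.trans hrank
  -- G' is singular
  have hdet : G'.det = 0 := by
    by_contra hne
    have : G'.rank = d + 1 := by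
      rw [Matrix.rank_of_isUnit G' ((Matrix.isUnit_iff_isUnit_det G').mpr
        (isUnit_iff_ne_zero.mpr hne)), Fintype.card_fin]
    omega
  obtain ⟨w, hw0, hww⟩ := (Matrix.exists_mulVec_eq_zero_iff).mpr hdet
  -- mu ≠ 0
  have hmu_ne : μ ≠ 0 := by
    rintro rfl
    apply hw0
    simpa [hG'def] using hww
  have hmu_pos : 0 < μ := lt_of_le_of_ne hmu_nonneg (Ne.symm hmu_ne)
  -- -μ⁻¹ is an eigenvalue of S'
  have hwS : S'.mulVec w = (-μ⁻¹) • w := by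
    have h1 : w + μ • S'.mulVec w = 0 := by
      have := hww
      rw [hG'def] at this
      simpa [Matrix.add_mulVec, Matrix.smul_mulVec] using this
    funext i
    have := congrFun h1 i
    simp only [Pi.add_apply, Pi.smul_apply, Pi.zero_apply, smul_eq_mul] at this ⊢
    field_simp
    linarith
  have heig : Module.End.HasEigenvalue (Matrix.toLin' S') (-μ⁻¹) :=
    Module.End.hasEigenvalue_of_hasEigenvector
      ⟨Module.End.mem_eigenspace_iff.mpr (by simpa [Matrix.toLin'_apply] using hwS), hw0⟩
  have hlam_le : lam ≤ -μ⁻¹ := hlam_min _ heig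
  -- eigenvector of lam
  obtain ⟨v, hv⟩ := hlam.exists_hasEigenvector
  have hv0 : v ≠ 0 := hv.2
  have hvS : S'.mulVec v = lam • v := by
    have := Module.End.mem_eigenspace_iff.mp hv.1
    simpa [Matrix.toLin'_apply] using this
  have hvv_pos : 0 < v ⬝ᵥ v := by
    rcases lt_or_eq_of_le (Finset.sum_nonneg fun i _ => mul_self_nonneg (v i) :
      (0:ℝ) ≤ v ⬝ᵥ v) with h | h
    · exact h
    · exact absurd (dotProduct_self_eq_zero.mp h.symm) hv0
  have hform : 0 ≤ (1 + μ * lam) * (v ⬝ᵥ v) := by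
    have := hPSD'.dotProduct_mulVec_nonneg v
    rw [hG'def] at this
    have h2 : v ⬝ᵥ (G' *ᵥ v) = (1 + μ * lam) * (v ⬝ᵥ v) := by
      rw [hG'def, Matrix.add_mulVec, Matrix.smul_mulVec, hvS, Matrix.one_mulVec,
        dotProduct_add, dotProduct_smul, dotProduct_smul]
      simp [smul_eq_mul]; ring
    rw [← h2]
    simpa using this
  have hmulam : μ * lam = -1 := by
    have h1 : 0 ≤ 1 + μ * lam := by
      rcases le_or_gt 0 (1 + μ * lam) with h | h
      · exact h
      · nlinarith
    have h2 : μ * lam ≤ μ * (-μ⁻¹) := mul_le_mul_of_nonneg_left hlam_le hmu_nonneg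
    rw [mul_neg, mul_inv_cancel₀ hmu_ne] at h2
    linarith
  have hmu_eq : μ = -lam⁻¹ := by
    field_simp
    linarith [hmulam]
  -- G' = L Lᵀ
  have hGL : G' = L * Lᵀ := by
    rw [hL, hG'def, hmu_eq, neg_smul, sub_eq_add_neg]
  -- kernel of G' is the eigenspace
  have hkerG' : ∀ u : Fin (d+1) → ℝ, G' *ᵥ u = 0 ↔ S' *ᵥ u = lam • u := by
    intro u
    constructor
    · intro h
      rw [hG'def] at h
      have h1 : u + μ • (S' *ᵥ u) = 0 := by
        simpa [Matrix.add_mulVec, Matrix.smul_mulVec] using h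
      funext i
      have := congrFun h1 i
      rw [hmu_eq] at this
      simp only [Pi.add_apply, Pi.smul_apply, Pi.zero_apply, smul_eq_mul] at this ⊢
      field_simp at this ⊢
      linarith
    · intro h
      rw [hG'def]
      rw [Matrix.add_mulVec, Matrix.smul_mulVec, h, Matrix.one_mulVec, hmu_eq]
      funext i
      simp only [Pi.add_apply, Pi.smul_apply, Pi.zero_apply, smul_eq_mul]
      field_simp
      ring
  have hker_eq : LinearMap.ker (Matrix.mulVecLin G') =
      Module.End.eigenspace (Matrix.toLin' S') lam := by
    ext u
    rw [LinearMap.mem_ker, Module.End.mem_eigenspace_iff]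
    simpa [Matrix.mulVecLin_apply, Matrix.toLin'_apply] using hkerG' u
  -- rank of G' is exactly d
  have hrk_nullity : G'.rank + Module.finrank ℝ (LinearMap.ker (Matrix.mulVecLin G'))
      = d + 1 := by
    have := LinearMap.finrank_range_add_finrank_ker (Matrix.mulVecLin G')
    rw [Module.finrank_fintype_fun_eq_card, Fintype.card_fin] at this
    exact this
  have hrankG' : G'.rank = d := by
    rw [hker_eq, hlam_mult] at hrk_nullity
    omega
  -- L has full column rank
  have hrankL : L.rank = d := by
    refine le_antisymm (Matrix.rank_le_width L) ?_
    calc d = G'.rank := hrankG'.symm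
    _ = (L * Lᵀ).rank := by rw [hGL]
    _ ≤ L.rank := Matrix.rank_mul_le_left L Lᵀ
  have hLinj : ∀ c : Fin d → ℝ, L *ᵥ c = 0 → c = 0 := by
    intro c hc
    have hker : LinearMap.ker (Matrix.mulVecLin L) = ⊥ := by
      have := LinearMap.finrank_range_add_finrank_ker (Matrix.mulVecLin L)
      rw [Module.finrank_fintype_fun_eq_card, Fintype.card_fin] at this
      have hz : Module.finrank ℝ (LinearMap.ker (Matrix.mulVecLin L)) = 0 := by
        have : L.rank + Module.finrank ℝ (LinearMap.ker (Matrix.mulVecLin L)) = d := this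
        omega
      exact Submodule.finrank_eq_zero.mp hz
    have : c ∈ LinearMap.ker (Matrix.mulVecLin L) := by
      rw [LinearMap.mem_ker, Matrix.mulVecLin_apply]; exact hc
    rwa [hker, Submodule.mem_bot] at this
  -- LᵀL is invertible
  have hdetLTL : (Lᵀ * L).det ≠ 0 := by
    intro hdd
    obtain ⟨c, hc0, hcc⟩ := (Matrix.exists_mulVec_eq_zero_iff).mpr hdd
    apply hc0
    apply hLinj
    have hdot : (L *ᵥ c) ⬝ᵥ (L *ᵥ c) = 0 := by
      have h1 : c ⬝ᵥ ((Lᵀ * L) *ᵥ c) = 0 := by rw [hcc, dotProduct_zero]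
      rw [← Matrix.mulVec_mulVec, Matrix.dotProduct_mulVec, Matrix.vecMul_transpose] at h1
      exact h1
    exact dotProduct_self_eq_zero.mp hdot
  have hLdagL : Ldag * L = 1 := by
    rw [hLdag, Matrix.mul_assoc, Matrix.nonsing_inv_mul _ (isUnit_iff_ne_zero.mpr hdetLTL)]
  -- the norm bound on L† x
  have hlamneg' : (0:ℝ) < -lam := by linarith
  have hxb : ∀ i, |x i| ≤ μ := fun i => abs_le.mpr ⟨(hbound _ _).1, (hbound _ _).2⟩
  have hnormx : vecEnorm (Ldag *ᵥ x) < 1 := by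
    have hs1 : ∀ i, |((-lam) • x) i| ≤ 1 := by
      intro i
      rw [Pi.smul_apply, smul_eq_mul, abs_mul, abs_of_pos hlamneg']
      calc -lam * |x i| ≤ -lam * μ := mul_le_mul_of_nonneg_left (hxb i) (le_of_lt hlamneg')
        _ = 1 := by rw [hmu_eq]; field_simp
    have h2 := cube_bound Ldag (-lam) hsmall ((-lam) • x) hs1
    rw [Matrix.mulVec_smul, vecEnorm_smul, abs_of_pos hlamneg'] at h2
    nlinarith [h2]
  set vhat : Fin (d+2) → ℝ := Fin.snoc v 0 with hvhat
  -- kernel of G is contained in the span of vhat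
  have hkerG : ∀ u : Fin (d+2) → ℝ, G *ᵥ u = 0 → ∃ c : ℝ, u = c • vhat := by
    intro u hu
    set t : ℝ := u (Fin.last (d+1)) with ht
    set u' : Fin (d+1) → ℝ := fun i => u i.castSucc with hu'
    have htop : ∀ i, (∑ j, G' i j * u' j) + x i * t = 0 := by
      intro i
      have h0 := congrFun hu i.castSucc
      rw [Matrix.mulVec, dotProduct, Fin.sum_univ_castSucc] at h0
      simp only [hGtop, hGcl, Pi.zero_apply] at h0
      exact h0
    have hbot : (∑ j, x j * u' j) + t = 0 := by
      have h0 := congrFun hu (Fin.last (d+1))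
      rw [Matrix.mulVec, dotProduct, Fin.sum_univ_castSucc] at h0
      simp only [hGlc, hGll, Pi.zero_apply, one_mul] at h0
      exact h0
    have htop' : G' *ᵥ u' = (-t) • x := by
      funext i
      have := htop i
      simp only [Matrix.mulVec, dotProduct, Pi.smul_apply, smul_eq_mul]
      linarith
    by_cases htz : t = 0
    · -- kernel vector of G'
      have hu'ker : S' *ᵥ u' = lam • u' :=
        (hkerG' u').mp (by rw [htop', htz, neg_zero, zero_smul])
      have hspan : Module.End.eigenspace (Matrix.toLin' S') lam = Submodule.span ℝ {v} := by
        symm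
        apply Submodule.eq_of_le_of_finrank_le
        · rw [Submodule.span_le, Set.singleton_subset_iff]
          exact hv.1
        · rw [finrank_span_singleton hv0]
          exact le_of_eq hlam_mult
      have humem : u' ∈ Submodule.span ℝ {v} := by
        rw [← hspan]
        exact Module.End.mem_eigenspace_iff.mpr (by simpa [Matrix.toLin'_apply] using hu'ker)
      obtain ⟨c, hc⟩ := Submodule.mem_span_singleton.mp humem
      refine ⟨c, ?_⟩
      funext k
      refine Fin.lastCases ?_ (fun i => ?_) k
      · rw [Pi.smul_apply, hvhat, Fin.snoc_last, smul_zero, ← ht, htz]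
      · have h1 := congrFun hc i
        rw [Pi.smul_apply] at h1
        rw [Pi.smul_apply, hvhat, Fin.snoc_castSucc]
        exact h1.symm
    · -- otherwise contradiction with the norm bound
      exfalso
      have hnt : (-t) ≠ 0 := by simpa using htz
      have hLLu : L *ᵥ (Lᵀ *ᵥ u') = (-t) • x := by
        rw [Matrix.mulVec_mulVec, ← hGL, htop']
      have hxL : x = L *ᵥ ((-t)⁻¹ • (Lᵀ *ᵥ u')) := by
        rw [Matrix.mulVec_smul, hLLu, smul_smul, inv_mul_cancel₀ hnt, one_smul]
      set z : Fin d → ℝ := Ldag *ᵥ x with hz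
      have hzval : z = (-t)⁻¹ • (Lᵀ *ᵥ u') := by
        rw [hz, hxL, Matrix.mulVec_mulVec, hLdagL, Matrix.one_mulVec]
      have hxz : x = L *ᵥ z := by rw [hzval]; exact hxL
      have hLTu : Lᵀ *ᵥ u' = (-t) • z := by
        rw [hzval, smul_smul, mul_inv_cancel₀ hnt, one_smul]
      have hxu : x ⬝ᵥ u' = (-t) * (z ⬝ᵥ z) := by
        calc x ⬝ᵥ u' = u' ⬝ᵥ x := dotProduct_comm _ _
          _ = u' ⬝ᵥ (L *ᵥ z) := by rw [← hxz]
          _ = (Lᵀ *ᵥ u') ⬝ᵥ z := by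
              rw [Matrix.dotProduct_mulVec, ← Matrix.mulVec_transpose]
          _ = (-t) * (z ⬝ᵥ z) := by rw [hLTu, smul_dotProduct, smul_eq_mul]
      have hzz1 : z ⬝ᵥ z = 1 := by
        have hb2 : x ⬝ᵥ u' + t = 0 := by rw [dotProduct]; exact hbot
        rw [hxu] at hb2
        have : t * (1 - z ⬝ᵥ z) = 0 := by linear_combination hb2
        rcases mul_eq_zero.mp this with h | h
        · exact absurd h htz
        · linarith
      have hzzlt : z ⬝ᵥ z < 1 := by
        have hnn : (0:ℝ) ≤ ∑ i, z i ^ 2 := Finset.sum_nonneg fun i _ => sq_nonneg _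
        have hsq := Real.sq_sqrt hnn
        have hge0 := Real.sqrt_nonneg (∑ i, z i ^ 2)
        have : z ⬝ᵥ z = ∑ i, z i ^ 2 := by simp [dotProduct, sq]
        rw [this]
        unfold vecEnorm at hnormx
        nlinarith [hnormx]
      linarith
  -- finish by rank counting
  have hKle : LinearMap.ker (Matrix.mulVecLin G) ≤ Submodule.span ℝ {vhat} := by
    intro u hu
    obtain ⟨c, hc⟩ := hkerG u (by simpa [Matrix.mulVecLin_apply] using hu)
    exact Submodule.mem_span_singleton.mpr ⟨c, hc.symm⟩
  have hvhat0 : vhat ≠ 0 := by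
    intro h
    apply hv0
    funext i
    have := congrFun h i.castSucc
    simpa [hvhat, Fin.snoc_castSucc] using this
  have hfr : Module.finrank ℝ (LinearMap.ker (Matrix.mulVecLin G)) ≤ 1 := by
    calc Module.finrank ℝ (LinearMap.ker (Matrix.mulVecLin G))
        ≤ Module.finrank ℝ (Submodule.span ℝ {vhat}) := Submodule.finrank_mono hKle
      _ = 1 := finrank_span_singleton hvhat0
  have hrn := LinearMap.finrank_range_add_finrank_ker (Matrix.mulVecLin G)
  rw [Module.finrank_fintype_fun_eq_card, Fintype.card_fin] at hrn
  have hrG : G.rank = Module.finrank ℝ (LinearMap.range (Matrix.mulVecLin G)) := rfl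
  rw [hrG] at hrank
  omega
end
end

section
/- Let d ≥ 1 and let S be a real symmetric (d+2)×(d+2) matrix whose last row and last column are identically zero and whose leading (d+1)×(d+1) principal submatrix S' has zero diagonal and all off-diagonal entries equal to ±1. Let λ < 0 be the minimum eigenvalue of S', suppose λ has multiplicity 1 as an eigenvalue of S', let L be a real (d+1)×d matrix with L Lᵀ = I - λ⁻¹ S', and set L† := (Lᵀ L)⁻¹ Lᵀ. For y ∈ {±1}^{d+1}, let Z(y) denote the (d+2)×(d+2) symmetric matrix whose leading (d+1)×(d+1) block and bottom-right entry are zero, whose last column is (y,0)ᵀ, and whose last row is (yᵀ,0). Suppose there exists a nonempty subset 𝒴 ⊆ {±1}^{d+1} such that: the family {L† y}_{y∈𝒴} is conically independent; ‖L† y‖₂ < -λ for every y ∈ {±1}^{d+1} \ 𝒴; and for every y ∈ 𝒴 the matrix S + Z(y) has minimum eigenvalue λ with multiplicity 2. Then a pair (μ, X), with μ ∈ ℝ and X a real symmetric (d+2)×(d+2) matrix, satisfies I + μS + X ∈ E_{d+2,d}, X_{ij} = 0 whenever i = j or S_{ij} ≠ 0, and -μ ≤ X_{ij} ≤ μ for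 all i,j, if and only if μ = -λ⁻¹ and X = -λ⁻¹ Z(y) for some y ∈ 𝒴. -/
open Matrix

noncomputable section

/-- Euclidean norm of a vector in `ℝ^m`. -/
def enorm {m : ℕ} (v : Fin m → ℝ) : ℝ := Real.sqrt (∑ i, v i ^ 2)

/-- A finite family of vectors is conically independent if no member is a nonnegative
combination of the others. -/
def ConicallyIndependent {ι : Type*} [Fintype ι] [DecidableEq ι] {m : ℕ}
    (v : ι → (Fin m → ℝ)) : Prop :=
  ¬ ∃ (j : ι) (α : ι → ℝ), (∀ i, 0 ≤ α i) ∧ v j = ∑ i ∈ Finset.univ.erase j, α i • v i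

namespace CglAux

/-- eigenvalue lower bound gives PSD of shift -/
lemma psd_shift {m : ℕ} (M : Matrix (Fin m) (Fin m) ℝ) (hM : M.IsHermitian) (lam : ℝ)
    (hlb : ∀ t : ℝ, Module.End.HasEigenvalue (Matrix.toLin' M) t → lam ≤ t) :
    (M - lam • 1).PosSemidef := by
  have hN : (M - lam • (1 : Matrix (Fin m) (Fin m) ℝ)).IsHermitian := by
    refine hM.sub ?_
    unfold Matrix.IsHermitian
    ext i j
    simp [Matrix.one_apply, eq_comm]
  refine hN.posSemidef_iff_eigenvalues_nonneg.mpr fun i => ?_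
  set t := hN.eigenvalues i with ht
  have hv := hN.mulVec_eigenvectorBasis i
  have hv0 : ⇑(hN.eigenvectorBasis i) ≠ 0 := by simpa using hN.eigenvectorBasis.orthonormal.ne_zero i
  set v : Fin m → ℝ := ⇑(hN.eigenvectorBasis i) with hvdef
  have hMv : M *ᵥ v = (t + lam) • v := by
    have h1 : (M - lam • 1) *ᵥ v = M *ᵥ v - lam • v := by
      rw [Matrix.sub_mulVec, Matrix.smul_mulVec, Matrix.one_mulVec]
    rw [h1] at hv
    rw [add_smul]
    linear_combination (norm := module) hv
  have hev : Module.End.HasEigenvalue (Matrix.toLin' M) (t + lam) := by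
    refine Module.End.hasEigenvalue_of_hasEigenvector ⟨?_, hv0⟩
    rw [Module.End.mem_eigenspace_iff, Matrix.toLin'_apply, hMv]
  linarith [hlb _ hev, show (0 : Fin m → ℝ) i = 0 from rfl]

lemma rank_add_ker {a b : ℕ} (M : Matrix (Fin a) (Fin b) ℝ) :
    M.rank + Module.finrank ℝ (LinearMap.ker M.mulVecLin) = b := by
  have := LinearMap.finrank_range_add_finrank_ker M.mulVecLin
  rwa [Module.finrank_fin_fun] at this

lemma ker_shift {m : ℕ} (M : Matrix (Fin m) (Fin m) ℝ) (lam : ℝ) :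
    LinearMap.ker (M - lam • 1).mulVecLin = Module.End.eigenspace (Matrix.toLin' M) lam := by
  ext x
  rw [LinearMap.mem_ker, Matrix.mulVecLin_apply, Module.End.mem_eigenspace_iff,
    Matrix.toLin'_apply, Matrix.sub_mulVec, Matrix.smul_mulVec, Matrix.one_mulVec,
    sub_eq_zero]

lemma psd_smul {m : ℕ} {M : Matrix (Fin m) (Fin m) ℝ} (hM : M.PosSemidef) {c : ℝ} (hc : 0 ≤ c) :
    (c • M).PosSemidef := by
  refine Matrix.PosSemidef.of_dotProduct_mulVec_nonneg ?_ fun x => ?_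
  · unfold Matrix.IsHermitian
    rw [Matrix.conjTranspose_smul]
    rw [hM.1]
    simp
  · rw [Matrix.smul_mulVec, dotProduct_smul]
    exact mul_nonneg hc (by simpa using hM.dotProduct_mulVec_nonneg x)

lemma sum_sq_eq_zero {m : ℕ} {v : Fin m → ℝ} (h : ∑ i, v i * v i = 0) : v = 0 := by
  have : ∀ i ∈ Finset.univ, v i * v i = 0 := by
    rw [← Finset.sum_eq_zero_iff_of_nonneg (fun i _ => mul_self_nonneg (v i))]
    exact h
  ext i
  exact mul_self_eq_zero.mp (this i (Finset.mem_univ i))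

lemma psd_dot_zero {m : ℕ} {M : Matrix (Fin m) (Fin m) ℝ} (hM : M.PosSemidef)
    {x : Fin m → ℝ} (hx : x ⬝ᵥ M *ᵥ x = 0) : M *ᵥ x = 0 := by
  have := (hM.dotProduct_mulVec_zero_iff x)
  rw [← this]
  simpa using hx

lemma dot_snoc {m : ℕ} (a b : Fin m → ℝ) (s r : ℝ) :
    (Fin.snoc a s : Fin (m+1) → ℝ) ⬝ᵥ (Fin.snoc b r : Fin (m+1) → ℝ) = a ⬝ᵥ b + s * r := by
  simp [dotProduct, Fin.sum_univ_castSucc]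

lemma mulVec_snoc {d : ℕ} (G : Matrix (Fin (d+2)) (Fin (d+2)) ℝ)
    (B : Matrix (Fin (d+1)) (Fin (d+1)) ℝ) (x : Fin (d+1) → ℝ)
    (hGblock : ∀ i j, G i.castSucc j.castSucc = B i j)
    (hGcol : ∀ i, G i.castSucc (Fin.last (d+1)) = x i)
    (hGrow : ∀ i, G (Fin.last (d+1)) i.castSucc = x i)
    (hGcorner : G (Fin.last (d+1)) (Fin.last (d+1)) = 1)
    (z' : Fin (d+1) → ℝ) (t : ℝ) :
    G *ᵥ (Fin.snoc z' t : Fin (d+2) → ℝ) =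
      Fin.snoc (B *ᵥ z' + t • x) (x ⬝ᵥ z' + t) := by
  ext j
  refine Fin.lastCases ?_ (fun i => ?_) j
  · simp only [Fin.snoc_last, Matrix.mulVec, dotProduct, Fin.sum_univ_castSucc,
      Fin.snoc_castSucc, Fin.snoc_last, hGrow, hGcorner]
    simp [mul_comm]
  · simp only [Fin.snoc_castSucc, Matrix.mulVec, dotProduct, Fin.sum_univ_castSucc,
      Fin.snoc_castSucc, Fin.snoc_last, hGblock, hGcol, Pi.add_apply, Pi.smul_apply,
      smul_eq_mul]
    simp [mul_comm]

lemma snoc_eq_zero_iff {m : ℕ} (a : Fin m → ℝ) (s : ℝ) :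
    (Fin.snoc a s : Fin (m+1) → ℝ) = 0 ↔ a = 0 ∧ s = 0 := by
  constructor
  · intro h
    constructor
    · ext i
      have := congrFun h i.castSucc
      simpa using this
    · have := congrFun h (Fin.last m)
      simpa using this
  · rintro ⟨rfl, rfl⟩
    ext j
    refine Fin.lastCases ?_ (fun i => ?_) j <;> simp

lemma dot_LT {a b : ℕ} (L : Matrix (Fin a) (Fin b) ℝ) (q : Fin a → ℝ) :
    (Lᵀ *ᵥ q) ⬝ᵥ (Lᵀ *ᵥ q) = q ⬝ᵥ ((L * Lᵀ) *ᵥ q) := by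
  calc (Lᵀ *ᵥ q) ⬝ᵥ (Lᵀ *ᵥ q) = q ⬝ᵥ (L *ᵥ (Lᵀ *ᵥ q)) := by
        rw [Matrix.mulVec_transpose, ← Matrix.dotProduct_mulVec]
    _ = q ⬝ᵥ ((L * Lᵀ) *ᵥ q) := by rw [Matrix.mulVec_mulVec]

lemma core {d : ℕ} (L : Matrix (Fin (d+1)) (Fin d) ℝ) (u : Fin (d+1) → ℝ) (hu : u ≠ 0)
    (hkerB : ∀ w, (L * Lᵀ) *ᵥ w = 0 → ∃ t : ℝ, w = t • u)
    (huB : Lᵀ *ᵥ u = 0)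
    (G : Matrix (Fin (d+2)) (Fin (d+2)) ℝ) (hG : G.PosSemidef) (hrank : G.rank ≤ d)
    (x : Fin (d+1) → ℝ)
    (hGblock : ∀ i j, G i.castSucc j.castSucc = (L * Lᵀ) i j)
    (hGcol : ∀ i, G i.castSucc (Fin.last (d+1)) = x i)
    (hGrow : ∀ i, G (Fin.last (d+1)) i.castSucc = x i)
    (hGcorner : G (Fin.last (d+1)) (Fin.last (d+1)) = 1) :
    x ⬝ᵥ u = 0 ∧ ∃ c : Fin d → ℝ, L *ᵥ c = x ∧ c ⬝ᵥ c = 1 := by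
  set B := L * Lᵀ with hB
  have hmv := mulVec_snoc G B x hGblock hGcol hGrow hGcorner
  set q0 : Fin (d+2) → ℝ := Fin.snoc u 0 with hq0
  have hBu : B *ᵥ u = 0 := by
    rw [hB, ← Matrix.mulVec_mulVec, huB, Matrix.mulVec_zero]
  have hGq0 : G *ᵥ q0 = 0 := by
    apply psd_dot_zero hG
    rw [hq0, hmv u 0, dot_snoc, hBu]
    simp
  have hxu : x ⬝ᵥ u = 0 := by
    have := congrFun hGq0 (Fin.last (d+1))
    rw [hq0, hmv u 0] at this
    simpa using this
  refine ⟨hxu, ?_⟩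
  have hq0ker : q0 ∈ LinearMap.ker G.mulVecLin := by
    rw [LinearMap.mem_ker, Matrix.mulVecLin_apply, hGq0]
  have hq0ne : q0 ≠ 0 := by
    rw [hq0]
    intro h
    exact hu ((snoc_eq_zero_iff u 0).mp h).1
  have hker2 : 2 ≤ Module.finrank ℝ (LinearMap.ker G.mulVecLin) := by
    have h1 := rank_add_ker G
    omega
  have hnotle : ¬ (LinearMap.ker G.mulVecLin ≤ Submodule.span ℝ {q0}) := by
    intro hle
    have := Submodule.finrank_mono hle
    rw [finrank_span_singleton hq0ne] at this
    omega
  obtain ⟨z, hzker, hznots⟩ := SetLike.not_le_iff_exists.mp hnotle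
  set z' : Fin (d+1) → ℝ := fun i => z i.castSucc with hz'
  set t : ℝ := z (Fin.last (d+1)) with htdef
  have hzsnoc : z = Fin.snoc z' t := by
    ext j
    refine Fin.lastCases ?_ (fun i => ?_) j <;> simp [hz', htdef]
  have hGz : G *ᵥ z = 0 := by
    rw [LinearMap.mem_ker, Matrix.mulVecLin_apply] at hzker
    exact hzker
  rw [hzsnoc, hmv z' t] at hGz
  obtain ⟨h1, h2⟩ := (snoc_eq_zero_iff _ _).mp hGz
  have ht : t ≠ 0 := by
    intro ht0
    rw [ht0, zero_smul, add_zero] at h1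
    obtain ⟨c, hc⟩ := hkerB z' h1
    apply hznots
    rw [Submodule.mem_span_singleton]
    refine ⟨c, ?_⟩
    rw [hzsnoc, hc, hq0, ht0]
    ext j
    refine Fin.lastCases ?_ (fun i => ?_) j <;> simp
  set q : Fin (d+1) → ℝ := (-t)⁻¹ • z' with hq
  have hBq : B *ᵥ q = x := by
    rw [hq, Matrix.mulVec_smul]
    have : B *ᵥ z' = -(t • x) := eq_neg_of_add_eq_zero_left h1
    rw [this, smul_neg, smul_smul, show (-t)⁻¹ * t = -1 by field_simp]
    simp
  have hxq : x ⬝ᵥ q = 1 := by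
    rw [hq, dotProduct_smul]
    have hxz : x ⬝ᵥ z' = -t := eq_neg_of_add_eq_zero_left h2
    rw [hxz, smul_eq_mul]
    field_simp
  refine ⟨Lᵀ *ᵥ q, ?_, ?_⟩
  · rw [Matrix.mulVec_mulVec, ← hB, hBq]
  · calc (Lᵀ *ᵥ q) ⬝ᵥ (Lᵀ *ᵥ q) = q ⬝ᵥ (L *ᵥ (Lᵀ *ᵥ q)) := by
          rw [Matrix.mulVec_transpose, ← Matrix.dotProduct_mulVec]
      _ = 1 := by rw [Matrix.mulVec_mulVec, ← hB, hBq, dotProduct_comm, hxq]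

lemma kerB_span {d : ℕ} (S' : Matrix (Fin (d+1)) (Fin (d+1)) ℝ) (lam : ℝ) (hlam_ne : lam ≠ 0)
    (L : Matrix (Fin (d+1)) (Fin d) ℝ) (hL : L * Lᵀ = 1 - lam⁻¹ • S')
    (u : Fin (d+1) → ℝ) (hu0 : u ≠ 0) (hSu : S' *ᵥ u = lam • u)
    (hmult : Module.finrank ℝ (Module.End.eigenspace (Matrix.toLin' S') lam) = 1) :
    ∀ w, (L * Lᵀ) *ᵥ w = 0 → ∃ t : ℝ, w = t • u := by
  set E := Module.End.eigenspace (Matrix.toLin' S') lam with hE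
  have huE : u ∈ E := by
    rw [hE, Module.End.mem_eigenspace_iff, Matrix.toLin'_apply, hSu]
  have hspanE : Submodule.span ℝ {u} = E := by
    apply Submodule.eq_of_le_of_finrank_le
    · rw [Submodule.span_le, Set.singleton_subset_iff]; exact huE
    · rw [hmult, finrank_span_singleton hu0]
  intro w hw
  have hwE : w ∈ E := by
    rw [hE, Module.End.mem_eigenspace_iff, Matrix.toLin'_apply]
    rw [hL] at hw
    have h1 : w - lam⁻¹ • (S' *ᵥ w) = 0 := by
      rw [← hw, Matrix.sub_mulVec, Matrix.one_mulVec, Matrix.smul_mulVec]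
    have h2 : lam • (w - lam⁻¹ • (S' *ᵥ w)) = 0 := by rw [h1, smul_zero]
    rw [smul_sub, smul_smul, mul_inv_cancel₀ hlam_ne, one_smul, sub_eq_zero] at h2
    exact h2.symm
  rw [← hspanE] at hwE
  obtain ⟨t, ht⟩ := Submodule.mem_span_singleton.mp hwE
  exact ⟨t, ht.symm⟩

lemma dot_eq_sum_sq {m : ℕ} (v : Fin m → ℝ) : v ⬝ᵥ v = ∑ i, v i ^ 2 := by
  simp [dotProduct, pow_two]

end CglAux

set_option maxHeartbeats 3200000 in
open CglAux in
/-- Lemma `eiginf`(b): characterization of the minimizers of the subprogram. -/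
theorem lemma_eiginf_b (d : ℕ) (hd : 1 ≤ d)
    (S : Matrix (Fin (d + 2)) (Fin (d + 2)) ℝ) (hSsymm : S.IsSymm)
    (hlast : ∀ i, S i (Fin.last (d + 1)) = 0 ∧ S (Fin.last (d + 1)) i = 0)
    (S' : Matrix (Fin (d + 1)) (Fin (d + 1)) ℝ)
    (hS' : ∀ i j, S' i j = S i.castSucc j.castSucc)
    (hdiag : ∀ i, S' i i = 0)
    (hoff : ∀ i j, i ≠ j → S' i j = 1 ∨ S' i j = -1)
    (lam : ℝ) (hlam_neg : lam < 0)
    (hlam : Module.End.HasEigenvalue (Matrix.toLin' S') lam)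
    (hlam_min : ∀ t : ℝ, Module.End.HasEigenvalue (Matrix.toLin' S') t → lam ≤ t)
    (hlam_mult : Module.finrank ℝ (Module.End.eigenspace (Matrix.toLin' S') lam) = 1)
    (L : Matrix (Fin (d + 1)) (Fin d) ℝ)
    (hL : L * Lᵀ = 1 - lam⁻¹ • S')
    (Ldag : Matrix (Fin d) (Fin (d + 1)) ℝ)
    (hLdag : Ldag = (Lᵀ * L)⁻¹ * Lᵀ)
    (Z : (Fin (d + 1) → ℝ) → Matrix (Fin (d + 2)) (Fin (d + 2)) ℝ)
    (hZ : ∀ y i j, Z y i j =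
      if hi : i = Fin.last (d + 1) then
        (if hj : j = Fin.last (d + 1) then 0 else y (j.castPred hj))
      else
        (if j = Fin.last (d + 1) then y (i.castPred hi) else 0))
    (𝒴 : Finset (Fin (d + 1) → ℝ)) (h𝒴ne : 𝒴.Nonempty)
    (h𝒴sign : ∀ y ∈ 𝒴, ∀ i, y i = 1 ∨ y i = -1)
    (hconic : ConicallyIndependent (fun y : 𝒴 => Ldag.mulVec (y : Fin (d + 1) → ℝ)))
    (hout : ∀ y : Fin (d + 1) → ℝ, (∀ i, y i = 1 ∨ y i = -1) → y ∉ 𝒴 →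
      _root_.enorm (Ldag.mulVec y) < -lam)
    (hmult2 : ∀ y ∈ 𝒴,
      Module.End.HasEigenvalue (Matrix.toLin' (S + Z y)) lam ∧
      (∀ t : ℝ, Module.End.HasEigenvalue (Matrix.toLin' (S + Z y)) t → lam ≤ t) ∧
      Module.finrank ℝ (Module.End.eigenspace (Matrix.toLin' (S + Z y)) lam) = 2) :
    ∀ (μ : ℝ) (X : Matrix (Fin (d + 2)) (Fin (d + 2)) ℝ),
      (X.IsSymm ∧ memE (d + 2) d (1 + μ • S + X) ∧
        (∀ i j : Fin (d + 2), (i = j ∨ S i j ≠ 0) → X i j = 0) ∧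
        (∀ i j : Fin (d + 2), -μ ≤ X i j ∧ X i j ≤ μ)) ↔
      (μ = -lam⁻¹ ∧ ∃ y ∈ 𝒴, X = (-lam⁻¹) • Z y) := by
  classical
  have hlam_ne : lam ≠ 0 := ne_of_lt hlam_neg
  set μ0 : ℝ := -lam⁻¹ with hμ0
  have hμ0pos : 0 < μ0 := by
    rw [hμ0]
    simp only [neg_pos]
    exact inv_lt_zero.mpr hlam_neg
  have hμ0lam : μ0 * lam = -1 := by rw [hμ0]; field_simp
  have hμ0inv : μ0⁻¹ = -lam := by rw [hμ0, inv_neg, inv_inv]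
  have hcs : ∀ i : Fin (d+1), i.castSucc ≠ Fin.last (d+1) := fun i => (Fin.castSucc_lt_last i).ne
  -- Z entry facts
  have hZ0 : ∀ y (i j : Fin (d+1)), Z y i.castSucc j.castSucc = 0 := by
    intro y i j; rw [hZ]; rw [dif_neg (hcs i), if_neg (hcs j)]
  have hZcol : ∀ y (i : Fin (d+1)), Z y i.castSucc (Fin.last (d+1)) = y i := by
    intro y i; rw [hZ]; rw [dif_neg (hcs i), if_pos rfl]; simp
  have hZrow : ∀ y (i : Fin (d+1)), Z y (Fin.last (d+1)) i.castSucc = y i := by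
    intro y i; rw [hZ]; rw [dif_pos rfl, dif_neg (hcs i)]; simp
  have hZll : ∀ y, Z y (Fin.last (d+1)) (Fin.last (d+1)) = 0 := by
    intro y; rw [hZ]; simp
  have hZdiag : ∀ y (i : Fin (d+2)), Z y i i = 0 := by
    intro y i
    refine Fin.lastCases ?_ (fun i => ?_) i
    · exact hZll y
    · exact hZ0 y i i
  -- S entry facts
  have hSblock : ∀ i j, S i.castSucc j.castSucc = S' i j := fun i j => (hS' i j).symm
  have hSdiagz : ∀ i : Fin (d+2), S i i = 0 := by
    intro i
    refine Fin.lastCases ?_ (fun i => ?_) i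
    · exact (hlast _).1
    · rw [hSblock]; exact hdiag i
  have hS'symm : S'.IsSymm := by
    ext i j
    rw [Matrix.transpose_apply, hS', hS', hSsymm.apply]
  have hS'herm : S'.IsHermitian := by
    rw [Matrix.IsHermitian, Matrix.conjTranspose_eq_transpose_of_trivial]; exact hS'symm
  -- eigenvector u
  obtain ⟨u, huv⟩ := hlam.exists_hasEigenvector
  have hu0 : u ≠ 0 := huv.2
  have hSu : S' *ᵥ u = lam • u := by
    have h := huv.apply_eq_smul
    rwa [Matrix.toLin'_apply] at h
  have huu : 0 < u ⬝ᵥ u := by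
    rcases eq_or_lt_of_le (Finset.sum_nonneg fun i _ => mul_self_nonneg (u i) :
      (0:ℝ) ≤ u ⬝ᵥ u) with h | h
    · exact absurd (dotProduct_self_eq_zero.mp h.symm) hu0
    · exact h
  have hBu : (L * Lᵀ) *ᵥ u = 0 := by
    rw [hL, Matrix.sub_mulVec, Matrix.one_mulVec, Matrix.smul_mulVec, hSu, smul_smul,
      inv_mul_cancel₀ hlam_ne, one_smul, sub_self]
  have huLT : Lᵀ *ᵥ u = 0 := by
    have h := dot_LT L u
    rw [hBu, dotProduct_zero] at h
    exact dotProduct_self_eq_zero.mp h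
  have hkerB := kerB_span S' lam hlam_ne L hL u hu0 hSu hlam_mult
  -- L has full column rank, Lᵀ * L invertible
  have hdet : IsUnit (Lᵀ * L).det := by
    have hkerBfin : Module.finrank ℝ (LinearMap.ker (L * Lᵀ).mulVecLin) = 1 := by
      have hle : LinearMap.ker (L * Lᵀ).mulVecLin ≤ Submodule.span ℝ {u} := by
        intro w hw
        obtain ⟨t, ht⟩ := hkerB w (by rwa [LinearMap.mem_ker, Matrix.mulVecLin_apply] at hw)
        rw [Submodule.mem_span_singleton]
        exact ⟨t, ht.symm⟩
      have hge : Submodule.span ℝ {u} ≤ LinearMap.ker (L * Lᵀ).mulVecLin := by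
        rw [Submodule.span_le, Set.singleton_subset_iff]
        rw [SetLike.mem_coe, LinearMap.mem_ker, Matrix.mulVecLin_apply]
        exact hBu
      rw [le_antisymm hle hge, finrank_span_singleton hu0]
    have hrkB : (L * Lᵀ).rank = d := by
      have := rank_add_ker (L * Lᵀ)
      omega
    have hrkL : L.rank = d := by
      have := Matrix.rank_self_mul_transpose L
      omega
    have hkerL : Module.finrank ℝ (LinearMap.ker L.mulVecLin) = 0 := by
      have := rank_add_ker L
      omega
    have hLinj : ∀ w, L *ᵥ w = 0 → w = 0 := by
      intro w hw
      have hmem : w ∈ LinearMap.ker L.mulVecLin := by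
        rw [LinearMap.mem_ker, Matrix.mulVecLin_apply]; exact hw
      rw [Submodule.finrank_eq_zero.mp hkerL] at hmem
      simpa using hmem
    rw [isUnit_iff_ne_zero]
    intro hdet0
    obtain ⟨v, hv, hv0⟩ := (Matrix.exists_mulVec_eq_zero_iff).mpr hdet0
    apply hv
    apply hLinj
    have h := dot_LT Lᵀ v
    rw [Matrix.transpose_transpose] at h
    rw [hv0, dotProduct_zero] at h
    exact dotProduct_self_eq_zero.mp h
  have hLdagL : ∀ c, Ldag *ᵥ (L *ᵥ c) = c := by
    intro c
    rw [Matrix.mulVec_mulVec, hLdag, Matrix.mul_assoc, Matrix.nonsing_inv_mul _ hdet,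
      Matrix.one_mulVec]
  -- symmetry facts for Z
  have hZsymm : ∀ y : Fin (d+1) → ℝ, (Z y)ᵀ = Z y := by
    intro y
    ext i j
    rw [Matrix.transpose_apply]
    refine Fin.lastCases ?_ (fun i' => ?_) i
    · refine Fin.lastCases ?_ (fun j' => ?_) j
      · rfl
      · rw [hZcol, hZrow]
    · refine Fin.lastCases ?_ (fun j' => ?_) j
      · rw [hZrow, hZcol]
      · rw [hZ0, hZ0]
  have hMherm : ∀ y : Fin (d+1) → ℝ, (S + Z y).IsHermitian := by
    intro y
    rw [Matrix.IsHermitian, Matrix.conjTranspose_eq_transpose_of_trivial,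
      Matrix.transpose_add, hZsymm, hSsymm]
  -- the canonical PSD witness for elements of 𝒴
  have hGveq : ∀ v : Fin (d+1) → ℝ,
      (1 : Matrix (Fin (d+2)) (Fin (d+2)) ℝ) + μ0 • S + μ0 • Z v
        = μ0 • ((S + Z v) - lam • 1) := by
    intro v
    have h : μ0 • ((S + Z v) - lam • (1 : Matrix (Fin (d+2)) (Fin (d+2)) ℝ))
        = μ0 • S + μ0 • Z v - (μ0 * lam) • 1 := by
      rw [smul_sub, smul_add, smul_smul]
    rw [h, hμ0lam]
    simp only [neg_smul, one_smul, sub_neg_eq_add]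
    abel
  have hGvblock : ∀ (v : Fin (d+1) → ℝ) (i j : Fin (d+1)),
      (μ0 • ((S + Z v) - lam • 1)) i.castSucc j.castSucc = (L * Lᵀ) i j := by
    intro v i j
    rw [hL]
    by_cases hij : i = j
    · subst hij
      simp only [Matrix.smul_apply, Matrix.sub_apply, Matrix.add_apply, Matrix.one_apply_eq,
        hZ0, hSblock, hdiag, smul_eq_mul]
      rw [hμ0]
      field_simp
      ring
    · have hcne : i.castSucc ≠ j.castSucc := fun h => hij (Fin.castSucc_inj.mp h)
      simp only [Matrix.smul_apply, Matrix.sub_apply, Matrix.add_apply,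
        Matrix.one_apply_ne hcne, Matrix.one_apply_ne hij, hZ0, hSblock, smul_eq_mul, hμ0]
      ring
  have hGvcol : ∀ (v : Fin (d+1) → ℝ) (i : Fin (d+1)),
      (μ0 • ((S + Z v) - lam • 1)) i.castSucc (Fin.last (d+1)) = (μ0 • v) i := by
    intro v i
    simp only [Matrix.smul_apply, Matrix.sub_apply, Matrix.add_apply,
      Matrix.one_apply_ne (hcs i), (hlast i.castSucc).1, hZcol, smul_eq_mul, Pi.smul_apply]
    ring
  have hGvrow : ∀ (v : Fin (d+1) → ℝ) (i : Fin (d+1)),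
      (μ0 • ((S + Z v) - lam • 1)) (Fin.last (d+1)) i.castSucc = (μ0 • v) i := by
    intro v i
    have hne : (Fin.last (d+1)) ≠ i.castSucc := fun h => (hcs i) h.symm
    simp only [Matrix.smul_apply, Matrix.sub_apply, Matrix.add_apply,
      Matrix.one_apply_ne hne, (hlast i.castSucc).2, hZrow, smul_eq_mul, Pi.smul_apply]
    ring
  have hGvcorner : ∀ v : Fin (d+1) → ℝ,
      (μ0 • ((S + Z v) - lam • 1)) (Fin.last (d+1)) (Fin.last (d+1)) = 1 := by
    intro v
    simp only [Matrix.smul_apply, Matrix.sub_apply, Matrix.add_apply, Matrix.one_apply_eq,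
      (hlast (Fin.last (d+1))).1, hZll, smul_eq_mul]
    rw [hμ0]
    field_simp
    ring
  have hGvker : ∀ v : Fin (d+1) → ℝ, LinearMap.ker (μ0 • ((S + Z v) - lam • 1)).mulVecLin
      = Module.End.eigenspace (Matrix.toLin' (S + Z v)) lam := by
    intro v
    rw [← ker_shift (S + Z v) lam]
    ext z
    simp only [LinearMap.mem_ker, Matrix.mulVecLin_apply, Matrix.smul_mulVec,
      smul_eq_zero]
    constructor
    · rintro (h | h)
      · exact absurd h (ne_of_gt hμ0pos)
      · exact h
    · intro h; exact Or.inr h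
  have hGvpsd : ∀ v ∈ 𝒴, (μ0 • ((S + Z v) - lam • 1)).PosSemidef := by
    intro v hv
    exact psd_smul (psd_shift _ (hMherm v) lam (hmult2 v hv).2.1) hμ0pos.le
  have hGvrank : ∀ v ∈ 𝒴, (μ0 • ((S + Z v) - lam • 1)).rank ≤ d := by
    intro v hv
    have h1 := rank_add_ker (μ0 • ((S + Z v) - lam • 1))
    rw [hGvker v, (hmult2 v hv).2.2] at h1
    omega
  have hYfacts : ∀ v ∈ 𝒴, v ⬝ᵥ u = 0 ∧ (Ldag *ᵥ v) ⬝ᵥ (Ldag *ᵥ v) = lam ^ 2 := by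
    intro v hv
    obtain ⟨hxu, c, hLc, hcc⟩ := core L u hu0 hkerB huLT _ (hGvpsd v hv) (hGvrank v hv)
      (μ0 • v) (hGvblock v) (hGvcol v) (hGvrow v) (hGvcorner v)
    constructor
    · rw [smul_dotProduct, smul_eq_mul, mul_eq_zero] at hxu
      rcases hxu with h | h
      · exact absurd h (ne_of_gt hμ0pos)
      · exact h
    · have h1 : Ldag *ᵥ v = μ0⁻¹ • c := by
        have h2 : Ldag *ᵥ (L *ᵥ c) = c := hLdagL c
        rw [hLc, Matrix.mulVec_smul] at h2
        rw [← h2, smul_smul, inv_mul_cancel₀ (ne_of_gt hμ0pos), one_smul]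
      rw [h1, smul_dotProduct, dotProduct_smul, hcc, hμ0inv, smul_eq_mul,
        smul_eq_mul]
      ring
  -- PSD shift fact for S'
  have hpsdshift := psd_shift S' hS'herm lam hlam_min
  have hpsdS' : ∀ w : Fin (d+1) → ℝ, lam * (w ⬝ᵥ w) ≤ w ⬝ᵥ (S' *ᵥ w) := by
    intro w
    have h := hpsdshift.dotProduct_mulVec_nonneg w
    simp only [star_trivial] at h
    rw [Matrix.sub_mulVec, Matrix.smul_mulVec, Matrix.one_mulVec, dotProduct_sub,
      dotProduct_smul, smul_eq_mul] at h
    linarith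
  intro μ X
  constructor
  · rintro ⟨hXsymm, hmemE, hXzero, hXbound⟩
    obtain ⟨hGpsd, hGdiag, hGrank⟩ : (1 + μ • S + X).PosSemidef ∧
        (∀ i, (1 + μ • S + X) i i = 1) ∧ (1 + μ • S + X).rank ≤ d := hmemE
    have hmu_nonneg : 0 ≤ μ := by
      have h1 := (hXbound 0 0).1
      have h2 : X 0 0 = 0 := hXzero 0 0 (Or.inl rfl)
      linarith
    set x : Fin (d+1) → ℝ := fun i => X i.castSucc (Fin.last (d+1)) with hx
    have hXoff : ∀ i j : Fin (d+1), X i.castSucc j.castSucc = 0 := by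
      intro i j
      by_cases hij : i = j
      · subst hij; exact hXzero _ _ (Or.inl rfl)
      · refine hXzero _ _ (Or.inr ?_)
        rw [hSblock]
        rcases hoff i j hij with h | h <;> rw [h] <;> norm_num
    have hXll : X (Fin.last (d+1)) (Fin.last (d+1)) = 0 := hXzero _ _ (Or.inl rfl)
    have hXrow : ∀ i : Fin (d+1), X (Fin.last (d+1)) i.castSucc = x i := by
      intro i
      exact hXsymm.apply i.castSucc (Fin.last (d+1))
    set G : Matrix (Fin (d+2)) (Fin (d+2)) ℝ := 1 + μ • S + X with hG
    have hGblockμ : ∀ i j : Fin (d+1), G i.castSucc j.castSucc = (1 + μ • S') i j := by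
      intro i j
      rw [hG]
      simp only [Matrix.add_apply, Matrix.smul_apply, hXoff, hSblock, add_zero, smul_eq_mul]
      congr 1
      by_cases hij : i = j
      · subst hij; rw [Matrix.one_apply_eq, Matrix.one_apply_eq]
      · rw [Matrix.one_apply_ne (fun h => hij (Fin.castSucc_inj.mp h)),
          Matrix.one_apply_ne hij]
    have hGcolμ : ∀ i, G i.castSucc (Fin.last (d+1)) = x i := by
      intro i
      rw [hG]
      simp only [Matrix.add_apply, Matrix.smul_apply, Matrix.one_apply_ne (hcs i),
        (hlast i.castSucc).1, smul_eq_mul, mul_zero, add_zero, zero_add]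
      rfl
    have hGrowμ : ∀ i, G (Fin.last (d+1)) i.castSucc = x i := by
      intro i
      rw [hG]
      have hne : (Fin.last (d+1)) ≠ i.castSucc := fun h => (hcs i) h.symm
      simp only [Matrix.add_apply, Matrix.smul_apply, Matrix.one_apply_ne hne,
        (hlast i.castSucc).2, smul_eq_mul, mul_zero, add_zero, zero_add]
      exact hXrow i
    have hGcornerμ : G (Fin.last (d+1)) (Fin.last (d+1)) = 1 := by
      rw [hG]
      simp only [Matrix.add_apply, Matrix.smul_apply, Matrix.one_apply_eq,
        (hlast (Fin.last (d+1))).1, hXll, smul_eq_mul, mul_zero, add_zero]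
    have hmvG := mulVec_snoc G (1 + μ • S') x hGblockμ hGcolμ hGrowμ hGcornerμ
    have hBu' : (1 + μ • S') *ᵥ u = (1 + μ * lam) • u := by
      rw [Matrix.add_mulVec, Matrix.one_mulVec, Matrix.smul_mulVec, hSu, smul_smul,
        add_smul, one_smul]
    have hq0form : (Fin.snoc u 0 : Fin (d+2) → ℝ) ⬝ᵥ (G *ᵥ Fin.snoc u 0)
        = (1 + μ * lam) * (u ⬝ᵥ u) := by
      rw [hmvG u 0, dot_snoc, zero_smul, add_zero, hBu', dotProduct_smul]
      simp only [smul_eq_mul, zero_mul, add_zero]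
    have hmule : μ ≤ μ0 := by
      have h0 := hGpsd.dotProduct_mulVec_nonneg (Fin.snoc u 0)
      simp only [star_trivial] at h0
      rw [hq0form] at h0
      by_contra hgt
      push_neg at hgt
      have h2 : (μ - μ0) * lam < 0 := mul_neg_of_pos_of_neg (sub_pos.mpr hgt) hlam_neg
      have h3 : 1 + μ * lam < 0 := by nlinarith [hμ0lam]
      have h4 : (1 + μ * lam) * (u ⬝ᵥ u) < 0 := mul_neg_of_neg_of_pos h3 huu
      linarith
    have hmuge : μ0 ≤ μ := by
      by_contra hlt
      push_neg at hlt
      have h2 : (μ0 - μ) * lam < 0 := mul_neg_of_pos_of_neg (sub_pos.mpr hlt) hlam_neg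
      have h3 : 0 < 1 + μ * lam := by nlinarith [hμ0lam]
      have hPD : ∀ w : Fin (d+1) → ℝ, (1 + μ • S') *ᵥ w = 0 → w = 0 := by
        intro w hw
        by_contra hw0
        have hww : 0 < w ⬝ᵥ w := by
          rcases eq_or_lt_of_le (Finset.sum_nonneg fun i _ => mul_self_nonneg (w i) :
            (0:ℝ) ≤ w ⬝ᵥ w) with h | h
          · exact absurd (dotProduct_self_eq_zero.mp h.symm) hw0
          · exact h
        have h5 : w ⬝ᵥ ((1 + μ • S') *ᵥ w) = w ⬝ᵥ w + μ * (w ⬝ᵥ (S' *ᵥ w)) := by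
          rw [Matrix.add_mulVec, Matrix.one_mulVec, dotProduct_add,
            Matrix.smul_mulVec, dotProduct_smul, smul_eq_mul]
        rw [hw, dotProduct_zero] at h5
        have h6 := hpsdS' w
        have h7 : μ * (lam * (w ⬝ᵥ w)) ≤ μ * (w ⬝ᵥ (S' *ᵥ w)) :=
          mul_le_mul_of_nonneg_left h6 hmu_nonneg
        nlinarith
      have hker1 : ∀ z, G *ᵥ z = 0 → z (Fin.last (d+1)) = 0 → z = 0 := by
        intro z hz hzl
        have hzsnoc : z = Fin.snoc (fun i => z i.castSucc) (z (Fin.last (d+1))) := by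
          ext j
          refine Fin.lastCases ?_ (fun i => ?_) j <;> simp
        rw [hzsnoc, hmvG] at hz
        obtain ⟨h8, h9⟩ := (snoc_eq_zero_iff _ _).mp hz
        rw [hzl, zero_smul, add_zero] at h8
        have h10 := hPD _ h8
        rw [hzsnoc, hzl, h10]
        exact (snoc_eq_zero_iff _ _).mpr ⟨rfl, rfl⟩
      have hinj : Function.Injective
          ((LinearMap.proj (Fin.last (d+1)) : (Fin (d+2) → ℝ) →ₗ[ℝ] ℝ).comp
            (LinearMap.ker G.mulVecLin).subtype) := by
        intro a b hab
        simp only [LinearMap.comp_apply, LinearMap.proj_apply, Submodule.subtype_apply] at hab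
        have h9 : ((a : Fin (d+2) → ℝ) - b) (Fin.last (d+1)) = 0 := by
          simp [hab]
        have h10 : G *ᵥ ((a : Fin (d+2) → ℝ) - b) = 0 := by
          rw [Matrix.mulVec_sub]
          have ha := a.2
          have hb := b.2
          rw [LinearMap.mem_ker, Matrix.mulVecLin_apply] at ha hb
          rw [ha, hb, sub_self]
        have h11 := hker1 _ h10 h9
        exact Subtype.ext (by rwa [sub_eq_zero] at h11)
      have hle1 : Module.finrank ℝ (LinearMap.ker G.mulVecLin) ≤ 1 := by
        have h12 := LinearMap.finrank_le_finrank_of_injective hinj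
        simpa using h12
      have h13 := rank_add_ker G
      omega
    have hmu : μ = μ0 := le_antisymm hmule hmuge
    subst hmu
    have hGblock2 : ∀ i j : Fin (d+1), G i.castSucc j.castSucc = (L * Lᵀ) i j := by
      intro i j
      rw [hGblockμ, hL]
      simp only [Matrix.add_apply, Matrix.sub_apply, Matrix.smul_apply, smul_eq_mul, hμ0]
      ring
    obtain ⟨hxu, c, hLc, hcc⟩ := core L u hu0 hkerB huLT G hGpsd hGrank x hGblock2 hGcolμ
      hGrowμ hGcornerμ
    set yh : Fin (d+1) → ℝ := μ0⁻¹ • x with hyh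
    have hxyh : x = μ0 • yh := by
      rw [hyh, smul_smul, mul_inv_cancel₀ (ne_of_gt hμ0pos), one_smul]
    have hinvpos : (0:ℝ) < μ0⁻¹ := inv_pos.mpr hμ0pos
    have hyhbound : ∀ i, |yh i| ≤ 1 := by
      intro i
      have h1 : -μ0 ≤ x i := (hXbound i.castSucc (Fin.last (d+1))).1
      have h2 : x i ≤ μ0 := (hXbound i.castSucc (Fin.last (d+1))).2
      rw [hyh, Pi.smul_apply, smul_eq_mul, abs_le]
      have h3 : μ0⁻¹ * μ0 = 1 := inv_mul_cancel₀ (ne_of_gt hμ0pos)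
      constructor
      · nlinarith
      · nlinarith
    have hLdagx : Ldag *ᵥ x = c := by rw [← hLc, hLdagL]
    set wbar : Fin d → ℝ := Ldag *ᵥ yh with hwb
    have hwbar : wbar = μ0⁻¹ • c := by rw [hwb, hyh, Matrix.mulVec_smul, hLdagx]
    have hwbar2 : wbar ⬝ᵥ wbar = lam ^ 2 := by
      rw [hwbar, smul_dotProduct, dotProduct_smul, hcc, hμ0inv, smul_eq_mul,
        smul_eq_mul]
      ring
    set b : Fin (d+1) → ℝ := Ldagᵀ *ᵥ wbar with hbdef
    have hbdot : ∀ v : Fin (d+1) → ℝ, b ⬝ᵥ v = wbar ⬝ᵥ (Ldag *ᵥ v) := by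
      intro v
      rw [hbdef, Matrix.mulVec_transpose, ← Matrix.dotProduct_mulVec]
    set s : Fin (d+1) → ℝ := fun i => if 0 ≤ b i then 1 else -1 with hsdef
    have hssign : ∀ i, s i = 1 ∨ s i = -1 := by
      intro i
      rw [hsdef]
      dsimp only
      split
      · exact Or.inl rfl
      · exact Or.inr rfl
    have hbs : b ⬝ᵥ s = ∑ i, |b i| := by
      show (∑ i, b i * s i) = ∑ i, |b i|
      apply Finset.sum_congr rfl
      intro i _
      rw [hsdef]
      dsimp only
      split
      · rw [mul_one, abs_of_nonneg ‹_›]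
      · rw [mul_neg_one, abs_of_neg (lt_of_not_ge ‹_›)]
    have hbyh : b ⬝ᵥ yh = lam ^ 2 := by rw [hbdot, ← hwb, hwbar2]
    have hble : b ⬝ᵥ yh ≤ ∑ i, |b i| := by
      show (∑ i, b i * yh i) ≤ ∑ i, |b i|
      apply Finset.sum_le_sum
      intro i _
      calc b i * yh i ≤ |b i * yh i| := le_abs_self _
        _ = |b i| * |yh i| := abs_mul _ _
        _ ≤ |b i| * 1 := mul_le_mul_of_nonneg_left (hyhbound i) (abs_nonneg _)
        _ = |b i| := mul_one _
    set vs : Fin d → ℝ := Ldag *ᵥ s with hvs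
    have hwv : lam ^ 2 ≤ wbar ⬝ᵥ vs := by
      rw [hvs, ← hbdot, hbs]
      linarith [hbyh, hble]
    have hl2 : (0:ℝ) < lam ^ 2 := by nlinarith [hlam_neg]
    have hCS := Finset.sum_mul_sq_le_sq_mul_sq Finset.univ wbar vs
    have h4 : (wbar ⬝ᵥ vs) ^ 2 ≤ (wbar ⬝ᵥ wbar) * (vs ⬝ᵥ vs) := by
      rw [dot_eq_sum_sq wbar, dot_eq_sum_sq vs]
      exact hCS
    have hs𝒴 : s ∈ 𝒴 := by
      by_contra hs
      have h1 := hout s hssign hs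
      rw [_root_.enorm, Real.sqrt_lt' (by linarith : (0:ℝ) < -lam)] at h1
      have h2 : vs ⬝ᵥ vs < lam ^ 2 := by
        rw [hvs, dot_eq_sum_sq]
        calc (∑ i, (Ldag *ᵥ s) i ^ 2) < (-lam) ^ 2 := h1
          _ = lam ^ 2 := by ring
      nlinarith [hwv, hwbar2, h2, h4, hl2]
    obtain ⟨hsu, hvsnorm⟩ := hYfacts s hs𝒴
    rw [← hvs] at hvsnorm
    have hvseq : vs = wbar := by
      have h5 : (vs - wbar) ⬝ᵥ (vs - wbar)
          = vs ⬝ᵥ vs - 2 * (wbar ⬝ᵥ vs) + wbar ⬝ᵥ wbar := by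
        rw [sub_dotProduct, dotProduct_sub, dotProduct_sub,
          dotProduct_comm vs wbar]
        ring
      have h7 : (vs - wbar) ⬝ᵥ (vs - wbar) ≤ 0 := by
        rw [h5, hvsnorm, hwbar2]
        linarith [hwv]
      have h8 : (vs - wbar) ⬝ᵥ (vs - wbar) = 0 :=
        le_antisymm h7 (Finset.sum_nonneg fun i _ => mul_self_nonneg _)
      exact sub_eq_zero.mp (dotProduct_self_eq_zero.mp h8)
    have hdag0 : Ldag *ᵥ (yh - s) = 0 := by
      rw [Matrix.mulVec_sub, ← hwb, ← hvs, hvseq, sub_self]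
    have hLT0 : Lᵀ *ᵥ (yh - s) = 0 := by
      have h10 : (Lᵀ * L) *ᵥ (Ldag *ᵥ (yh - s)) = 0 := by rw [hdag0, Matrix.mulVec_zero]
      rw [hLdag, Matrix.mulVec_mulVec, ← Matrix.mul_assoc,
        Matrix.mul_nonsing_inv _ hdet, Matrix.one_mul] at h10
      exact h10
    have hByh : (L * Lᵀ) *ᵥ (yh - s) = 0 := by
      rw [← Matrix.mulVec_mulVec, hLT0, Matrix.mulVec_zero]
    obtain ⟨t, ht⟩ := hkerB _ hByh
    have hyhu : yh ⬝ᵥ u = 0 := by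
      rw [hyh, smul_dotProduct, hxu, smul_zero]
    have htu : (0:ℝ) = t * (u ⬝ᵥ u) := by
      have h11 : (yh - s) ⬝ᵥ u = 0 := by
        rw [sub_dotProduct, hyhu, hsu, sub_self]
      rw [ht, smul_dotProduct, smul_eq_mul] at h11
      exact h11.symm
    have ht0 : t = 0 := by
      rcases mul_eq_zero.mp htu.symm with h | h
      · exact h
      · exact absurd h (ne_of_gt huu)
    have hyhs : yh = s := by
      rw [ht0, zero_smul] at ht
      exact sub_eq_zero.mp ht
    refine ⟨rfl, s, hs𝒴, ?_⟩
    ext i j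
    rw [Matrix.smul_apply, smul_eq_mul]
    have hxs : ∀ k, x k = μ0 * s k := by
      intro k
      rw [hxyh, hyhs, Pi.smul_apply, smul_eq_mul]
    refine Fin.lastCases ?_ (fun i' => ?_) i
    · refine Fin.lastCases ?_ (fun j' => ?_) j
      · rw [hXll, hZll, mul_zero]
      · rw [hXrow j', hZrow, hxs]
    · refine Fin.lastCases ?_ (fun j' => ?_) j
      · rw [hZcol, ← hxs]
      · rw [hXoff, hZ0, mul_zero]
  · rintro ⟨hmu, y, hy, hXeq⟩
    subst hmu
    subst hXeq
    have hysign := h𝒴sign y hy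
    refine ⟨?_, ⟨?_, ?_, ?_⟩, ?_, ?_⟩
    · rw [Matrix.IsSymm, Matrix.transpose_smul, hZsymm]
    · rw [hGveq y]
      exact hGvpsd y hy
    · intro i
      simp only [Matrix.add_apply, Matrix.smul_apply, Matrix.one_apply_eq, hSdiagz, hZdiag,
        smul_eq_mul, mul_zero, add_zero]
    · rw [hGveq y]
      exact hGvrank y hy
    · intro i j hij
      rcases hij with rfl | hSne
      · rw [Matrix.smul_apply, hZdiag, smul_zero]
      · have hine : i ≠ Fin.last (d+1) := by rintro rfl; exact hSne (hlast j).2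
        have hjne : j ≠ Fin.last (d+1) := by rintro rfl; exact hSne (hlast i).1
        rw [Matrix.smul_apply, ← Fin.castSucc_castPred i hine, ← Fin.castSucc_castPred j hjne,
          hZ0, smul_zero]
    · intro i j
      have hb : Z y i j = 0 ∨ Z y i j = 1 ∨ Z y i j = -1 := by
        refine Fin.lastCases ?_ (fun i' => ?_) i
        · refine Fin.lastCases ?_ (fun j' => ?_) j
          · rw [hZll]; exact Or.inl rfl
          · rw [hZrow]; exact Or.inr (hysign j')
        · refine Fin.lastCases ?_ (fun j' => ?_) j
          · rw [hZcol]; exact Or.inr (hysign i')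
          · rw [hZ0]; exact Or.inl rfl
      rw [Matrix.smul_apply, smul_eq_mul]
      rcases hb with h | h | h <;> rw [h] <;> constructor <;> nlinarith [hμ0pos]
end
end
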